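/- Let a > 0, let F ∈ 𝓢(S_a), and let ν₀ ∈ S_a be such that F(ν₀) = 0. Define G : S_a → ℂ by G(ν) = F(ν)/(ν − ν₀) for ν ≠ ν₀ and G(ν₀) = F^{(1)}(ν₀) (the continuous extension of the first derivative of F at ν₀). Then G ∈ 𝓢(S_a), and for every N, k ∈ ℕ there is a constant C > 0, depending only on a, ν₀, N, k, such that sup_{ν ∈ S_a} (1+|ν|)^N |G^{(k)}(ν)| ≤ C · max_{j ≤ k+1} sup_{ν ∈ S_a} (1+|ν|)^N |F^{(j)}(ν)|; in particular, derivatives of G up to order k are controlled by derivatives of F up to order k+1. -/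

import Mathlib

open MeasureTheory Complex

/-- The closed strip `S_a = {z : |Re z| ≤ a}`. -/
def Strip (a : ℝ) : Set ℂ := {z : ℂ | |z.re| ≤ a}

/-- The open strip `S_a° = {z : |Re z| < a}`. -/
def StripO (a : ℝ) : Set ℂ := {z : ℂ | |z.re| < a}

/-- Membership in the strip-Schwartz space `𝓢(S_a)`: `F` is continuous on the closed strip,
holomorphic on the open strip, `Fd k` is the continuous extension to the closed strip of the
`k`-th complex derivative of `F`, and all seminorms
`sup_{z ∈ S_a} (1+|z|)^N |Fd k z|` are finite. -/
def StripSchwartz (a : ℝ) (F : ℂ → ℂ) (Fd : ℕ → ℂ → ℂ) : Prop :=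
  ContinuousOn F (Strip a) ∧
  DifferentiableOn ℂ F (StripO a) ∧
  (∀ z ∈ Strip a, Fd 0 z = F z) ∧
  (∀ k : ℕ, ∀ z ∈ StripO a, Fd k z = iteratedDeriv k F z) ∧
  (∀ k : ℕ, ContinuousOn (Fd k) (Strip a)) ∧
  (∀ N k : ℕ, ∃ C : ℝ, ∀ z ∈ Strip a,
    (1 + ‖z‖) ^ N * ‖Fd k z‖ ≤ C)

/-!
Since `F ν₀ = 0`, integrating `d/dt F(ν₀ + t(ν - ν₀))` gives
`F ν = (ν - ν₀) ∫₀¹ F'(ν₀ + t(ν - ν₀)) dt`, so on the convex strip `G` is this segment integral, and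
differentiating under the integral sign `G⁽ᵏ⁾ ν = ∫₀¹ tᵏ F⁽ᵏ⁺¹⁾(ν₀ + t(ν - ν₀)) dt`.
For `‖ν - ν₀‖ < 1` this is bounded by `sup ‖F⁽ᵏ⁺¹⁾‖` while `(1 + ‖ν‖)^N ≤ (2 + ‖ν₀‖)^N`.
For `‖ν - ν₀‖ ≥ 1` one uses instead the Leibniz identity `(ν - ν₀) G⁽ᵐ⁾ + m G⁽ᵐ⁻¹⁾ = F⁽ᵐ⁾`
(integrate `d/dt (tᵐ F⁽ᵐ⁾(ν₀ + t(ν - ν₀)))`), which bounds the weighted norm of `G⁽ᵏ⁾` by `(k + 1)!`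
times the seminorms of `F, …, F⁽ᵏ⁾`. Everything is proved on the open strip and extended to the
closed one by continuity.
-/

open Set
open scoped Nat

noncomputable def segmentMoment (z₀ : ℂ) (f : ℂ → ℂ) (m : ℕ) (z : ℂ) : ℂ :=
  ∫ t in (0 : ℝ)..1, (t : ℂ) ^ m * f (z₀ + t * (z - z₀))

section SegmentMoment

variable {s : Set ℂ} {z₀ z : ℂ} {f f' : ℂ → ℂ}

lemma Convex.add_ofReal_mul_sub_mem (hs : Convex ℝ s) (hz₀ : z₀ ∈ s) (hz : z ∈ s) {t : ℝ}
    (ht : t ∈ Icc (0 : ℝ) 1) : z₀ + t * (z - z₀) ∈ s := by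
  simpa only [real_smul] using hs.add_smul_sub_mem hz₀ hz ht

lemma Convex.add_ofReal_mul_sub_mem_interior (hs : Convex ℝ s) (hz₀ : z₀ ∈ s)
    (hz : z ∈ interior s) {t : ℝ} (ht : t ∈ Ioc (0 : ℝ) 1) :
    z₀ + t * (z - z₀) ∈ interior s := by
  simpa only [real_smul] using hs.add_smul_sub_mem_interior' (subset_closure hz₀) hz ht

lemma continuousOn_segmentMoment (hs : Convex ℝ s) (hz₀ : z₀ ∈ s) (hf : ContinuousOn f s)
    (m : ℕ) : ContinuousOn (segmentMoment z₀ f m) s := by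
  rw [continuousOn_iff_continuous_domRestrict]
  -- clamping `t` to `[0, 1]` keeps the segment inside `s` without changing the integral
  have hclamp : Continuous (Function.uncurry fun (x : s) (t : ℝ) =>
      ((projIcc 0 1 zero_le_one t : ℝ) : ℂ) ^ m *
        f (z₀ + (projIcc 0 1 zero_le_one t : ℝ) * (x - z₀))) :=
    (by fun_prop : Continuous _).mul <| hf.comp_continuous (by fun_prop) fun p =>
      hs.add_ofReal_mul_sub_mem hz₀ p.1.2 (projIcc 0 1 zero_le_one p.2).2
  refine (intervalIntegral.continuous_parametric_intervalIntegral_of_continuous'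
    hclamp 0 1).congr fun x => intervalIntegral.integral_congr fun t ht => ?_
  rw [uIcc_of_le zero_le_one] at ht
  simp only [projIcc_of_mem _ ht]

lemma continuousOn_segmentIntegrand (hs : Convex ℝ s) (hz₀ : z₀ ∈ s) (hz : z ∈ s)
    (hf : ContinuousOn f s) (m : ℕ) :
    ContinuousOn (fun t : ℝ => (t : ℂ) ^ m * f (z₀ + t * (z - z₀))) (Icc 0 1) :=
  (by fun_prop : Continuous fun t : ℝ => (t : ℂ) ^ m).continuousOn.mul <|
    hf.comp (by fun_prop) fun _ ht => hs.add_ofReal_mul_sub_mem hz₀ hz ht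

lemma intervalIntegrable_segmentIntegrand (hs : Convex ℝ s) (hz₀ : z₀ ∈ s) (hz : z ∈ s)
    (hf : ContinuousOn f s) (m : ℕ) :
    IntervalIntegrable (fun t : ℝ => (t : ℂ) ^ m * f (z₀ + t * (z - z₀))) volume 0 1 :=
  (continuousOn_segmentIntegrand hs hz₀ hz hf m).intervalIntegrable_of_Icc zero_le_one

lemma norm_ofReal_pow_mul_le {t : ℝ} (ht : t ∈ Icc (0 : ℝ) 1) (m : ℕ) (w : ℂ) :
    ‖(t : ℂ) ^ m * w‖ ≤ ‖w‖ := by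
  rw [norm_mul, norm_pow, norm_real, Real.norm_of_nonneg ht.1]
  exact mul_le_of_le_one_left (norm_nonneg w) (pow_le_one₀ ht.1 ht.2)

lemma norm_segmentMoment_le (hs : Convex ℝ s) (hz₀ : z₀ ∈ s) (hz : z ∈ s) {B : ℝ}
    (hB : ∀ w ∈ s, ‖f w‖ ≤ B) (m : ℕ) : ‖segmentMoment z₀ f m z‖ ≤ B := by
  have hbound : ∀ t ∈ uIoc (0 : ℝ) 1, ‖(t : ℂ) ^ m * f (z₀ + t * (z - z₀))‖ ≤ B := by
    intro t ht
    rw [uIoc_of_le zero_le_one] at ht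
    exact (norm_ofReal_pow_mul_le (Ioc_subset_Icc_self ht) m _).trans
      (hB _ (hs.add_ofReal_mul_sub_mem hz₀ hz (Ioc_subset_Icc_self ht)))
  simpa [segmentMoment] using intervalIntegral.norm_integral_le_of_norm_le_const hbound

lemma hasDerivAt_segmentMoment (hs : Convex ℝ s) (hz₀ : z₀ ∈ s) (hf : ContinuousOn f s)
    (hf' : ContinuousOn f' s) (hderiv : ∀ w ∈ interior s, HasDerivAt f (f' w) w)
    (hz : z ∈ interior s) (m : ℕ) :
    HasDerivAt (segmentMoment z₀ f m) (segmentMoment z₀ f' (m + 1) z) z := by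
  obtain ⟨r, hr, hball⟩ : ∃ r > 0, Metric.closedBall z r ⊆ interior s :=
    Metric.nhds_basis_closedBall.mem_iff.mp (isOpen_interior.mem_nhds hz)
  obtain ⟨B, hB⟩ := ((isCompact_closedBall z r).prod isCompact_Icc).exists_bound_of_continuousOn
    (f := fun p : ℂ × ℝ => f' (z₀ + p.2 * (p.1 - z₀))) <| hf'.comp (by fun_prop) fun p hp =>
      hs.add_ofReal_mul_sub_mem hz₀ (interior_subset (hball hp.1))
        (show p.2 ∈ Icc (0 : ℝ) 1 from hp.2)
  have hmeas {g : ℂ → ℂ} (hg : ContinuousOn g s) (k : ℕ) {x : ℂ} (hx : x ∈ s) :=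
    (intervalIntegrable_segmentIntegrand hs hz₀ hx hg k).def'.aestronglyMeasurable
  refine (intervalIntegral.hasDerivAt_integral_of_dominated_loc_of_deriv_le
    (F := fun x (t : ℝ) => (t : ℂ) ^ m * f (z₀ + t * (x - z₀)))
    (F' := fun x (t : ℝ) => (t : ℂ) ^ (m + 1) * f' (z₀ + t * (x - z₀))) (bound := fun _ => B)
    (Metric.ball_mem_nhds z hr) ?_
    (intervalIntegrable_segmentIntegrand hs hz₀ (interior_subset hz) hf m)
    (hmeas hf' (m + 1) (interior_subset hz)) ?_ intervalIntegrable_const ?_).2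
  · filter_upwards [isOpen_interior.mem_nhds hz] with x hx using hmeas hf m (interior_subset hx)
  · refine Filter.Eventually.of_forall fun t ht x hx => ?_
    rw [uIoc_of_le zero_le_one] at ht
    exact (norm_ofReal_pow_mul_le (Ioc_subset_Icc_self ht) _ _).trans
      (hB (x, t) ⟨Metric.ball_subset_closedBall hx, Ioc_subset_Icc_self ht⟩)
  · refine Filter.Eventually.of_forall fun t ht x hx => ?_
    rw [uIoc_of_le zero_le_one] at ht
    have hseg := hs.add_ofReal_mul_sub_mem_interior hz₀
      (hball (Metric.ball_subset_closedBall hx)) ht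
    have hline : HasDerivAt (fun x : ℂ => z₀ + t * (x - z₀)) t x := by
      simpa using ((hasDerivAt_id x).sub_const z₀).const_mul (t : ℂ) |>.const_add z₀
    exact (((hderiv _ hseg).comp (h := fun x : ℂ => z₀ + t * (x - z₀)) x hline).const_mul
      ((t : ℂ) ^ m)).congr_deriv (by ring)

lemma sub_mul_segmentMoment_add (hs : Convex ℝ s) (hz₀ : z₀ ∈ s) (hf : ContinuousOn f s)
    (hf' : ContinuousOn f' s) (hderiv : ∀ w ∈ interior s, HasDerivAt f (f' w) w)
    (hz : z ∈ interior s) (m : ℕ) :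
    (z - z₀) * segmentMoment z₀ f' m z + m * segmentMoment z₀ f (m - 1) z
      = f z - 0 ^ m * f z₀ := by
  have hzs := interior_subset hz
  have hdt : ∀ t ∈ Ioo (0 : ℝ) 1, HasDerivAt (fun t : ℝ => (t : ℂ) ^ m * f (z₀ + t * (z - z₀)))
      (m * ((t : ℂ) ^ (m - 1) * f (z₀ + t * (z - z₀)))
        + (z - z₀) * ((t : ℂ) ^ m * f' (z₀ + t * (z - z₀)))) t := by
    intro t ht
    have hseg := hs.add_ofReal_mul_sub_mem_interior hz₀ hz (Ioo_subset_Ioc_self ht)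
    have hline : HasDerivAt (fun w : ℂ => z₀ + w * (z - z₀)) (z - z₀) (t : ℂ) := by
      simpa using ((hasDerivAt_id (t : ℂ)).mul_const (z - z₀)).const_add z₀
    have hcomp : HasDerivAt (fun w : ℂ => f (z₀ + w * (z - z₀)))
        (f' (z₀ + t * (z - z₀)) * (z - z₀)) (t : ℂ) :=
      (hderiv _ hseg).comp (h := fun w : ℂ => z₀ + w * (z - z₀)) _ hline
    exact (((hasDerivAt_pow m (t : ℂ)).mul hcomp).comp_ofReal).congr_deriv (by ring)
  have hint₁ := (intervalIntegrable_segmentIntegrand hs hz₀ hzs hf (m - 1)).const_mul (m : ℂ)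
  have hint₂ := (intervalIntegrable_segmentIntegrand hs hz₀ hzs hf' m).const_mul (z - z₀)
  have hFTC := intervalIntegral.integral_eq_sub_of_hasDerivAt_of_le zero_le_one
    (continuousOn_segmentIntegrand hs hz₀ hzs hf m) hdt (hint₁.add hint₂)
  rw [intervalIntegral.integral_add hint₁ hint₂, intervalIntegral.integral_const_mul,
    intervalIntegral.integral_const_mul] at hFTC
  simp only [ofReal_one, ofReal_zero, one_pow, one_mul, zero_mul, add_zero, add_sub_cancel] at hFTC
  rw [segmentMoment, segmentMoment, ← hFTC]
  ring

end SegmentMoment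

lemma iteratedDeriv_eq_of_hasDerivAt {𝕜 E : Type*} [NontriviallyNormedField 𝕜]
    [NormedAddCommGroup E] [NormedSpace 𝕜 E] {U : Set 𝕜} (hU : IsOpen U) {D : ℕ → 𝕜 → E}
    (hD : ∀ k, ∀ z ∈ U, HasDerivAt (D k) (D (k + 1) z) z) (k : ℕ) :
    ∀ z ∈ U, iteratedDeriv k (D 0) z = D k z := by
  induction k with
  | zero => simp
  | succ k ih =>
    intro z hz
    have heq : iteratedDeriv k (D 0) =ᶠ[nhds z] D k := Filter.eventually_of_mem (hU.mem_nhds hz) ih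
    rw [iteratedDeriv_succ, heq.deriv_eq, (hD k z hz).deriv]

lemma norm_le_factorial_mul_of_recurrence {d : ℂ} (hd : 1 ≤ ‖d‖) {g f : ℕ → ℂ}
    (h₀ : d * g 0 = f 0) (hsucc : ∀ m : ℕ, d * g (m + 1) + (m + 1) * g m = f (m + 1)) {w M : ℝ}
    (hw : 0 ≤ w) {n : ℕ} (hM : ∀ j ≤ n, w * ‖f j‖ ≤ M) : w * ‖g n‖ ≤ (n + 1)! * M := by
  have hd' : ∀ x : ℂ, ‖x‖ ≤ ‖d * x‖ := fun x => by
    rw [norm_mul]; exact le_mul_of_one_le_left (norm_nonneg x) hd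
  induction n with
  | zero =>
    calc w * ‖g 0‖ ≤ w * ‖f 0‖ := by rw [← h₀]; exact mul_le_mul_of_nonneg_left (hd' _) hw
      _ ≤ M := hM 0 le_rfl
      _ = (0 + 1)! * M := by simp
  | succ n ih =>
    have hg : ‖g (n + 1)‖ ≤ ‖f (n + 1)‖ + (n + 1) * ‖g n‖ := calc
      ‖g (n + 1)‖ ≤ ‖f (n + 1) - (n + 1) * g n‖ := by
        rw [← hsucc, add_sub_cancel_right]; exact hd' _
      _ ≤ ‖f (n + 1)‖ + (n + 1) * ‖g n‖ := by
        have hn : ‖(n + 1 : ℂ)‖ = n + 1 := by exact_mod_cast Complex.norm_natCast (n + 1)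
        simpa only [norm_mul, hn] using norm_sub_le (f (n + 1)) ((n + 1 : ℂ) * g n)
    have hM₀ : 0 ≤ M := (mul_nonneg hw (norm_nonneg _)).trans (hM 0 (Nat.zero_le _))
    calc w * ‖g (n + 1)‖ ≤ w * ‖f (n + 1)‖ + (n + 1) * (w * ‖g n‖) :=
          (mul_le_mul_of_nonneg_left hg hw).trans_eq (by ring)
      _ ≤ M + (n + 1) * ((n + 1)! * M) := by
        gcongr ?_ + (n + 1) * ?_
        exacts [hM (n + 1) le_rfl, ih fun j hj => hM j (by omega)]
      _ ≤ (n + 1 + 1)! * M := by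
        rw [Nat.factorial_succ (n + 1)]
        push_cast
        nlinarith [(Nat.one_le_cast (α := ℝ)).mpr (Nat.factorial_pos (n + 1))]

section Strip

variable {a : ℝ}

lemma strip_eq_preimage_re (a : ℝ) : Strip a = re ⁻¹' Icc (-a) a := by
  ext z; simp [Strip, abs_le]

lemma stripO_eq_preimage_re (a : ℝ) : StripO a = re ⁻¹' Ioo (-a) a := by
  ext z; simp [StripO, abs_lt]

lemma convex_strip (a : ℝ) : Convex ℝ (Strip a) := by
  rw [strip_eq_preimage_re]
  exact (convex_Icc _ _).linear_preimage reLm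

lemma interior_strip (a : ℝ) : interior (Strip a) = StripO a := by
  rw [strip_eq_preimage_re, interior_preimage_re, interior_Icc, stripO_eq_preimage_re]

lemma closure_stripO (ha : 0 < a) : closure (StripO a) = Strip a := by
  rw [stripO_eq_preimage_re, closure_preimage_re, closure_Ioo (by linarith), strip_eq_preimage_re]

lemma isOpen_stripO (a : ℝ) : IsOpen (StripO a) :=
  interior_strip a ▸ isOpen_interior

lemma stripO_subset_strip (a : ℝ) : StripO a ⊆ Strip a :=
  interior_strip a ▸ interior_subset

end Strip

namespace StripSchwartz

variable {a : ℝ} {ν₀ z : ℂ} {F G : ℂ → ℂ} {Fd Gd : ℕ → ℂ → ℂ}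

lemma continuousOn (hF : StripSchwartz a F Fd) : ContinuousOn F (Strip a) :=
  hF.1

lemma differentiableOn (hF : StripSchwartz a F Fd) : DifferentiableOn ℂ F (StripO a) :=
  hF.2.1

lemma deriv_zero_eq (hF : StripSchwartz a F Fd) (hz : z ∈ Strip a) : Fd 0 z = F z :=
  hF.2.2.1 z hz

lemma deriv_eq_iteratedDeriv (hF : StripSchwartz a F Fd) (k : ℕ) (hz : z ∈ StripO a) :
    Fd k z = iteratedDeriv k F z :=
  hF.2.2.2.1 k z hz

lemma continuousOn_deriv (hF : StripSchwartz a F Fd) (k : ℕ) : ContinuousOn (Fd k) (Strip a) :=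
  hF.2.2.2.2.1 k

lemma hasDerivAt (hF : StripSchwartz a F Fd) (m : ℕ) (hz : z ∈ interior (Strip a)) :
    HasDerivAt (Fd m) (Fd (m + 1) z) z := by
  rw [interior_strip] at hz
  have hiter := ((hF.differentiableOn.analyticOnNhd (isOpen_stripO a)).iterated_deriv m z
    hz).differentiableAt
  rw [← iteratedDeriv_eq_iterate] at hiter
  rw [hF.deriv_eq_iteratedDeriv (m + 1) hz, iteratedDeriv_succ]
  exact hiter.hasDerivAt.congr_of_eventuallyEq
    (Filter.eventually_of_mem ((isOpen_stripO a).mem_nhds hz) fun _ hw =>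
      hF.deriv_eq_iteratedDeriv m hw)

lemma exists_seminorm_le (hF : StripSchwartz a F Fd) (N n : ℕ) :
    ∃ M : ℝ, ∀ j ≤ n, ∀ z ∈ Strip a, (1 + ‖z‖) ^ N * ‖Fd j z‖ ≤ M := by
  choose C hC using hF.2.2.2.2.2 N
  refine ⟨∑ j ∈ Finset.range (n + 1), max (C j) 0, fun j hj z hz => (hC j z hz).trans ?_⟩
  exact (le_max_left _ _).trans <| Finset.single_le_sum (fun i _ => le_max_right (C i) 0)
    (Finset.mem_range.mpr (Nat.lt_succ_of_le hj))

lemma continuousOn_segmentMoment (hF : StripSchwartz a F Fd) (hν₀ : ν₀ ∈ Strip a) (j m : ℕ) :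
    ContinuousOn (segmentMoment ν₀ (Fd j) m) (Strip a) :=
  _root_.continuousOn_segmentMoment (convex_strip a) hν₀ (hF.continuousOn_deriv j) m

lemma hasDerivAt_segmentMoment (hF : StripSchwartz a F Fd) (hν₀ : ν₀ ∈ Strip a) (j m : ℕ)
    (hz : z ∈ StripO a) :
    HasDerivAt (segmentMoment ν₀ (Fd j) m) (segmentMoment ν₀ (Fd (j + 1)) (m + 1) z) z :=
  _root_.hasDerivAt_segmentMoment (convex_strip a) hν₀ (hF.continuousOn_deriv j)
    (hF.continuousOn_deriv (j + 1)) (fun _ hw => hF.hasDerivAt j hw) (interior_strip a ▸ hz) m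

lemma sub_mul_segmentMoment_zero (hF : StripSchwartz a F Fd) (hν₀ : ν₀ ∈ Strip a)
    (hF₀ : F ν₀ = 0) (hz : z ∈ StripO a) : (z - ν₀) * segmentMoment ν₀ (Fd 1) 0 z = F z := by
  have h := _root_.sub_mul_segmentMoment_add (convex_strip a) hν₀ (hF.continuousOn_deriv 0)
    (hF.continuousOn_deriv 1) (fun _ hw => hF.hasDerivAt 0 hw) (interior_strip a ▸ hz) 0
  rwa [hF.deriv_zero_eq hν₀, hF.deriv_zero_eq (stripO_subset_strip a hz), hF₀, Nat.cast_zero,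
    zero_mul, add_zero, pow_zero, one_mul, sub_zero] at h

lemma sub_mul_segmentMoment_succ_add (hF : StripSchwartz a F Fd) (hν₀ : ν₀ ∈ Strip a) (m : ℕ)
    (hz : z ∈ StripO a) :
    (z - ν₀) * segmentMoment ν₀ (Fd (m + 2)) (m + 1) z
      + (m + 1) * segmentMoment ν₀ (Fd (m + 1)) m z = Fd (m + 1) z := by
  simpa using _root_.sub_mul_segmentMoment_add (convex_strip a) hν₀
    (hF.continuousOn_deriv (m + 1)) (hF.continuousOn_deriv (m + 2))
    (fun _ hw => hF.hasDerivAt (m + 1) hw) (interior_strip a ▸ hz) (m + 1)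

lemma eqOn_segmentMoment_of_div (ha : 0 < a) (hF : StripSchwartz a F Fd) (hν₀ : ν₀ ∈ Strip a)
    (hF₀ : F ν₀ = 0) (hG : ∀ ν : ℂ, ν ≠ ν₀ → G ν = F ν / (ν - ν₀)) (hGν₀ : G ν₀ = Fd 1 ν₀) :
    EqOn G (segmentMoment ν₀ (Fd 1) 0) (Strip a) := by
  have hfactor : EqOn F (fun z => (z - ν₀) * segmentMoment ν₀ (Fd 1) 0 z) (Strip a) := by
    refine EqOn.of_subset_closure (fun z hz => (hF.sub_mul_segmentMoment_zero hν₀ hF₀ hz).symm)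
      hF.continuousOn
      ((continuousOn_id.sub continuousOn_const).mul (hF.continuousOn_segmentMoment hν₀ 1 0))
      (stripO_subset_strip a) (closure_stripO ha).ge
  intro z hz
  by_cases h : z = ν₀
  · subst h
    simp [segmentMoment, hGν₀]
  · rw [hG z h, hfactor hz, mul_div_cancel_left₀ _ (sub_ne_zero.mpr h)]

lemma iteratedDeriv_eq_segmentMoment (hF : StripSchwartz a F Fd) (hν₀ : ν₀ ∈ Strip a)
    (hG : EqOn G (segmentMoment ν₀ (Fd 1) 0) (StripO a)) (k : ℕ) (hz : z ∈ StripO a) :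
    iteratedDeriv k G z = segmentMoment ν₀ (Fd (k + 1)) k z := by
  rw [hG.iteratedDeriv_of_isOpen (isOpen_stripO a) k hz]
  exact iteratedDeriv_eq_of_hasDerivAt (D := fun k => segmentMoment ν₀ (Fd (k + 1)) k)
    (isOpen_stripO a) (fun k _ hw => hF.hasDerivAt_segmentMoment hν₀ (k + 1) k hw) k z hz

lemma weighted_norm_segmentMoment_le (ha : 0 < a) (hF : StripSchwartz a F Fd)
    (hν₀ : ν₀ ∈ Strip a) (hF₀ : F ν₀ = 0) {N k : ℕ} {M : ℝ}
    (hM : ∀ j ≤ k + 1, ∀ z ∈ Strip a, (1 + ‖z‖) ^ N * ‖Fd j z‖ ≤ M) (hz : z ∈ Strip a) :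
    (1 + ‖z‖) ^ N * ‖segmentMoment ν₀ (Fd (k + 1)) k z‖ ≤ ((2 + ‖ν₀‖) ^ N + (k + 1)!) * M := by
  have hM₀ : 0 ≤ M :=
    (mul_nonneg (by positivity) (norm_nonneg _)).trans (hM 0 (Nat.zero_le _) ν₀ hν₀)
  have hcont : ContinuousOn (fun z => (1 + ‖z‖) ^ N * ‖segmentMoment ν₀ (Fd (k + 1)) k z‖)
      (Strip a) :=
    (by fun_prop : Continuous fun z : ℂ => (1 + ‖z‖) ^ N).continuousOn.mul
      (hF.continuousOn_segmentMoment hν₀ (k + 1) k).norm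
  refine ContinuousWithinAt.closure_le ((closure_stripO ha).ge hz)
    ((hcont z hz).mono (stripO_subset_strip a)) continuousWithinAt_const fun z hz => ?_
  have hzS := stripO_subset_strip a hz
  rcases lt_or_ge ‖z - ν₀‖ 1 with hnear | hfar
  · have hweight : (1 + ‖z‖) ^ N ≤ (2 + ‖ν₀‖) ^ N :=
      pow_le_pow_left₀ (by positivity) (by linarith [norm_le_norm_add_norm_sub' z ν₀]) N
    have hsup : ∀ w ∈ Strip a, ‖Fd (k + 1) w‖ ≤ M := fun w hw =>
      (le_mul_of_one_le_left (norm_nonneg _) (one_le_pow₀ (by simp))).trans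
        (hM (k + 1) le_rfl w hw)
    calc (1 + ‖z‖) ^ N * ‖segmentMoment ν₀ (Fd (k + 1)) k z‖ ≤ (2 + ‖ν₀‖) ^ N * M :=
          mul_le_mul hweight (norm_segmentMoment_le (convex_strip a) hν₀ hzS hsup k)
            (norm_nonneg _) (by positivity)
      _ ≤ ((2 + ‖ν₀‖) ^ N + (k + 1)!) * M := by gcongr; simp
  · calc (1 + ‖z‖) ^ N * ‖segmentMoment ν₀ (Fd (k + 1)) k z‖ ≤ (k + 1)! * M :=
          norm_le_factorial_mul_of_recurrence (g := fun m => segmentMoment ν₀ (Fd (m + 1)) m z)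
            hfar ((hF.sub_mul_segmentMoment_zero hν₀ hF₀ hz).trans (hF.deriv_zero_eq hzS).symm)
            (fun m => hF.sub_mul_segmentMoment_succ_add hν₀ m hz) (by positivity)
            (fun j hj => hM j (by omega) z hzS)
      _ ≤ ((2 + ‖ν₀‖) ^ N + (k + 1)!) * M := by
        gcongr; exact le_add_of_nonneg_left (by positivity)

lemma div_sub (ha : 0 < a) (hF : StripSchwartz a F Fd) (hν₀ : ν₀ ∈ Strip a) (hF₀ : F ν₀ = 0)
    (hG : ∀ ν : ℂ, ν ≠ ν₀ → G ν = F ν / (ν - ν₀)) (hGν₀ : G ν₀ = Fd 1 ν₀) :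
    StripSchwartz a G fun k => segmentMoment ν₀ (Fd (k + 1)) k := by
  have hEq := hF.eqOn_segmentMoment_of_div ha hν₀ hF₀ hG hGν₀
  refine ⟨(hF.continuousOn_segmentMoment hν₀ 1 0).congr hEq, fun z hz => ?_,
    fun z hz => (hEq hz).symm,
    fun k z hz => (hF.iteratedDeriv_eq_segmentMoment hν₀
      (hEq.mono (stripO_subset_strip a)) k hz).symm,
    fun k => hF.continuousOn_segmentMoment hν₀ (k + 1) k, fun N k => ?_⟩
  · exact (hF.hasDerivAt_segmentMoment hν₀ 1 0 hz).differentiableAt.differentiableWithinAt.congr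
      (fun w hw => hEq (stripO_subset_strip a hw)) (hEq (stripO_subset_strip a hz))
  · obtain ⟨M, hM⟩ := hF.exists_seminorm_le N (k + 1)
    exact ⟨_, fun z hz => hF.weighted_norm_segmentMoment_le ha hν₀ hF₀ hM hz⟩

lemma deriv_eqOn_segmentMoment (ha : 0 < a) (hGS : StripSchwartz a G Gd)
    (hF : StripSchwartz a F Fd) (hν₀ : ν₀ ∈ Strip a)
    (hG : EqOn G (segmentMoment ν₀ (Fd 1) 0) (StripO a)) (k : ℕ) :
    EqOn (Gd k) (segmentMoment ν₀ (Fd (k + 1)) k) (Strip a) :=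
  EqOn.of_subset_closure (fun _ hz => (hGS.deriv_eq_iteratedDeriv k hz).trans
      (hF.iteratedDeriv_eq_segmentMoment hν₀ hG k hz))
    (hGS.continuousOn_deriv k) (hF.continuousOn_segmentMoment hν₀ (k + 1) k)
    (stripO_subset_strip a) (closure_stripO ha).ge

end StripSchwartz

/-- **Division lemma in `𝓢(S_a)`** (Step 4 of the proof of Theorem 2.3.9 of the paper).
If `F ∈ 𝓢(S_a)` vanishes at `ν₀ ∈ S_a` and `G ν = F ν / (ν − ν₀)` for `ν ≠ ν₀`,
`G ν₀ = F'(ν₀)`, then `G ∈ 𝓢(S_a)`, and for every `N, k` there is a constant `C > 0`,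
depending only on `a, ν₀, N, k`, such that the strip seminorm
`sup_{ν ∈ S_a} (1+|ν|)^N |G^{(k)}(ν)|` is at most `C` times the maximum over `j ≤ k+1`
of `sup_{ν ∈ S_a} (1+|ν|)^N |F^{(j)}(ν)|`. -/
theorem stmt_11 (a : ℝ) (ha : 0 < a) (ν₀ : ℂ) (hν₀ : ν₀ ∈ Strip a) :
    (∀ (F : ℂ → ℂ) (Fd : ℕ → ℂ → ℂ), StripSchwartz a F Fd → F ν₀ = 0 →
      ∀ G : ℂ → ℂ, (∀ ν : ℂ, ν ≠ ν₀ → G ν = F ν / (ν - ν₀)) → G ν₀ = Fd 1 ν₀ →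
      ∃ Gd : ℕ → ℂ → ℂ, StripSchwartz a G Gd) ∧
    (∀ N k : ℕ, ∃ C > (0 : ℝ),
      ∀ (F : ℂ → ℂ) (Fd : ℕ → ℂ → ℂ), StripSchwartz a F Fd → F ν₀ = 0 →
      ∀ (G : ℂ → ℂ) (Gd : ℕ → ℂ → ℂ),
        (∀ ν : ℂ, ν ≠ ν₀ → G ν = F ν / (ν - ν₀)) → G ν₀ = Fd 1 ν₀ →
        StripSchwartz a G Gd →
        ∀ M : ℝ,
        (∀ j ≤ k + 1, ∀ ν ∈ Strip a,
          (1 + ‖ν‖) ^ N * ‖Fd j ν‖ ≤ M) →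
        ∀ ν ∈ Strip a, (1 + ‖ν‖) ^ N * ‖Gd k ν‖ ≤ C * M) := by
  refine ⟨fun F Fd hF hF₀ G hG hGν₀ => ⟨_, hF.div_sub ha hν₀ hF₀ hG hGν₀⟩, fun N k => ?_⟩
  refine ⟨(2 + ‖ν₀‖) ^ N + (k + 1)!, by positivity, ?_⟩
  intro F Fd hF hF₀ G Gd hG hGν₀ hGS M hM ν hν
  have hEq := (hF.eqOn_segmentMoment_of_div ha hν₀ hF₀ hG hGν₀).mono (stripO_subset_strip a)
  rw [hGS.deriv_eqOn_segmentMoment ha hF hν₀ hEq k hν]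
  exact hF.weighted_norm_segmentMoment_le ha hν₀ hF₀ hM hν
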